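/- Let γ, γ', C, η > 0 and ρ ∈ (0, γ) be given such that η ≤ (1/4)·min{1 − 2^{−γ}, 1 − 2^{−γ'}, 1 − 2^{ρ−γ}}. Then for every bounded sequence {x_k}_{k≥0} of nonnegative reals satisfying x_k ≤ C·2^{−γk} + η·∑_{l=0}^{k−1} 2^{−γ(k−l)} x_l + η·∑_{l=k}^{∞} 2^{−γ'|k−l|} x_l for all k, one has x_k ≤ (4C + ‖x‖_{ℓ∞})·2^{−ρk} for all k. -/

import Mathlib

/-!
Write `p = 2^{-ρ}`. Starting from the a priori bound `x_k ≤ 2C p^k + B` with `B = ‖x‖_∞`, feed it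
into the right-hand side of the recursion: both geometric sums are at most
`(2C p^k + B) / (1 - q)` with `q ∈ {2^{ρ-γ}, 2^{-γ'}}`, and since `η ≤ (1 - q)/4` this returns
`x_k ≤ 2C p^k + B/2`. Iterating, the additive error halves at every step, so `x_k ≤ 2C p^k`.
-/

open Finset Filter Topology

lemma sum_range_pow_sub_le {s : ℝ} (hs0 : 0 ≤ s) (hs1 : s < 1) (k : ℕ) :
    ∑ l ∈ range k, s ^ (k - l) ≤ (1 - s)⁻¹ := by
  rw [← sum_range_reflect]
  calc ∑ j ∈ range k, s ^ (k - (k - 1 - j))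
      = ∑ j ∈ range k, s ^ (j + 1) :=
        sum_congr rfl fun j hj => by rw [mem_range] at hj; congr 1; omega
    _ ≤ ∑ j ∈ range k, s ^ j :=
        sum_le_sum fun j _ => pow_le_pow_of_le_one hs0 hs1.le j.le_succ
    _ ≤ (1 - s)⁻¹ := by
        simpa [← range_eq_Ico] using geom_sum_Ico_le_of_lt_one (m := 0) (n := k) hs0 hs1

lemma tsum_pow_mul_le {r c : ℝ} (hr0 : 0 ≤ r) (hr1 : r < 1) {y : ℕ → ℝ}
    (hy0 : ∀ j, 0 ≤ y j) (hyc : ∀ j, y j ≤ c) :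
    ∑' j, r ^ j * y j ≤ c * (1 - r)⁻¹ := by
  have hle : ∀ j, r ^ j * y j ≤ c * r ^ j := fun j => by
    rw [mul_comm c]; exact mul_le_mul_of_nonneg_left (hyc j) (pow_nonneg hr0 j)
  have hg : Summable fun j => c * r ^ j := (summable_geometric_of_lt_one hr0 hr1).mul_left c
  calc ∑' j, r ^ j * y j
      ≤ ∑' j, c * r ^ j :=
        (hg.of_nonneg_of_le (fun j => mul_nonneg (pow_nonneg hr0 j) (hy0 j)) hle).tsum_le_tsum
          hle hg
    _ = c * (1 - r)⁻¹ := by rw [tsum_mul_left, tsum_geometric_of_lt_one hr0 hr1]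

lemma le_of_le_add_of_halving {ι : Type*} {x a : ι → ℝ} {B : ℝ} (hB : 0 ≤ B)
    (hxB : ∀ i, x i ≤ a i + B)
    (halve : ∀ b, 0 ≤ b → (∀ i, x i ≤ a i + b) → ∀ i, x i ≤ a i + b / 2) (i : ι) :
    x i ≤ a i := by
  have hn : ∀ n : ℕ, ∀ i, x i ≤ a i + B * (1 / 2) ^ n := by
    intro n
    induction n with
    | zero => simpa using hxB
    | succ n ih =>
      intro i
      calc x i ≤ a i + B * (1 / 2) ^ n / 2 := halve _ (by positivity) ih i
        _ = a i + B * (1 / 2) ^ (n + 1) := by ring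
  have hlim : Tendsto (fun n : ℕ => a i + B * (1 / 2) ^ n) atTop (𝓝 (a i + B * 0)) :=
    tendsto_const_nhds.add
      ((tendsto_pow_atTop_nhds_zero_of_lt_one (by norm_num) (by norm_num)).const_mul B)
  simpa using ge_of_tendsto' hlim fun n => hn n i

section GeometricRecursion

variable {C η p r r' s : ℝ} {x : ℕ → ℝ}

lemma le_two_mul_pow_add_half (hC : 0 ≤ C) (hη : 0 ≤ η) (hp0 : 0 ≤ p) (hp1 : p ≤ 1)
    (hr0 : 0 ≤ r) (hrs : r ≤ s * p) (hs0 : 0 ≤ s) (hs1 : s < 1) (hr'0 : 0 ≤ r') (hr'1 : r' < 1)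
    (hηs : η ≤ 1 / 4 * (1 - s)) (hηr' : η ≤ 1 / 4 * (1 - r')) (hx0 : ∀ k, 0 ≤ x k)
    (hrec : ∀ k, x k ≤ C * r ^ k + η * ∑ l ∈ range k, r ^ (k - l) * x l
        + η * ∑' j, r' ^ j * x (k + j))
    {B : ℝ} (hB : 0 ≤ B) (hxB : ∀ k, x k ≤ 2 * C * p ^ k + B) (k : ℕ) :
    x k ≤ 2 * C * p ^ k + B / 2 := by
  set Q := 2 * C * p ^ k + B
  have hQ : 0 ≤ Q := by positivity
  have hrp : r ≤ p := hrs.trans (mul_le_of_le_one_left hp0 hs1.le)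
  have hrs' : r ≤ s := hrs.trans (mul_le_of_le_one_right hs0 hp1)
  have hpast : ∑ l ∈ range k, r ^ (k - l) * x l ≤ Q * (1 - s)⁻¹ := by
    have hterm : ∀ l ∈ range k, r ^ (k - l) * x l ≤ Q * s ^ (k - l) := by
      intro l hl
      have hlk : l ≤ k := (mem_range.mp hl).le
      have hpow : r ^ (k - l) * p ^ l ≤ s ^ (k - l) * p ^ k := by
        rw [← pow_sub_mul_pow p hlk, ← mul_assoc, ← mul_pow]
        gcongr
      calc r ^ (k - l) * x l
          ≤ r ^ (k - l) * (2 * C * p ^ l + B) := by gcongr; exact hxB l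
        _ = 2 * C * (r ^ (k - l) * p ^ l) + B * r ^ (k - l) := by ring
        _ ≤ 2 * C * (s ^ (k - l) * p ^ k) + B * s ^ (k - l) := by gcongr
        _ = Q * s ^ (k - l) := by ring
    calc ∑ l ∈ range k, r ^ (k - l) * x l
        ≤ ∑ l ∈ range k, Q * s ^ (k - l) := sum_le_sum hterm
      _ ≤ Q * (1 - s)⁻¹ := by
        rw [← mul_sum]; exact mul_le_mul_of_nonneg_left (sum_range_pow_sub_le hs0 hs1 k) hQ
  have hfuture : ∑' j, r' ^ j * x (k + j) ≤ Q * (1 - r')⁻¹ :=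
    tsum_pow_mul_le hr'0 hr'1 (fun j => hx0 _) fun j => (hxB (k + j)).trans <| by
      have := pow_le_pow_of_le_one hp0 hp1 (k.le_add_right j)
      dsimp only [Q]; gcongr
  have hcontract : ∀ q, q < 1 → η ≤ 1 / 4 * (1 - q) → η * (Q * (1 - q)⁻¹) ≤ Q / 4 := by
    intro q hq hηq
    calc η * (Q * (1 - q)⁻¹) = Q * (η / (1 - q)) := by ring
      _ ≤ Q * (1 / 4) :=
        mul_le_mul_of_nonneg_left (by rw [div_le_iff₀ (by linarith)]; linarith) hQ
      _ = Q / 4 := by ring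
  have hCr : C * r ^ k ≤ C * p ^ k := by gcongr
  linarith [hrec k, hcontract s hs1 hηs, hcontract r' hr'1 hηr',
    mul_le_mul_of_nonneg_left hpast hη, mul_le_mul_of_nonneg_left hfuture hη]

theorem le_two_mul_pow_of_le_geometric_sums (hC : 0 ≤ C) (hη : 0 ≤ η) (hp0 : 0 ≤ p)
    (hp1 : p ≤ 1) (hr0 : 0 ≤ r) (hrs : r ≤ s * p) (hs0 : 0 ≤ s) (hs1 : s < 1) (hr'0 : 0 ≤ r')
    (hr'1 : r' < 1) (hηs : η ≤ 1 / 4 * (1 - s)) (hηr' : η ≤ 1 / 4 * (1 - r'))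
    (hx0 : ∀ k, 0 ≤ x k) (hbdd : BddAbove (Set.range x))
    (hrec : ∀ k, x k ≤ C * r ^ k + η * ∑ l ∈ range k, r ^ (k - l) * x l
        + η * ∑' j, r' ^ j * x (k + j)) (k : ℕ) :
    x k ≤ 2 * C * p ^ k := by
  obtain ⟨M, hM⟩ := hbdd
  have hxM : ∀ k, x k ≤ M := fun k => hM ⟨k, rfl⟩
  refine le_of_le_add_of_halving (a := fun k => 2 * C * p ^ k) ((hx0 0).trans (hxM 0))
    (fun k => ?_) (fun b hb hxb => le_two_mul_pow_add_half hC hη hp0 hp1 hr0 hrs hs0 hs1 hr'0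
      hr'1 hηs hηr' hx0 hrec hb hxb) k
  have : 0 ≤ 2 * C * p ^ k := by positivity
  linarith [hxM k]

end GeometricRecursion

lemma two_rpow_mul_natCast (a : ℝ) (n : ℕ) : (2 : ℝ) ^ (a * n) = ((2 : ℝ) ^ a) ^ n :=
  Real.rpow_mul_natCast zero_le_two a n

theorem stmt_0_general (γ γ' C η ρ : ℝ) (hγ' : 0 < γ') (hC : 0 < C) (hη : 0 < η)
    (hρ : ρ ∈ Set.Ioo 0 γ)
    (hηle : η ≤ (1/4) * min (1 - (2:ℝ) ^ (-γ)) (min (1 - (2:ℝ) ^ (-γ')) (1 - (2:ℝ) ^ (ρ - γ))))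
    (x : ℕ → ℝ) (hx0 : ∀ k, 0 ≤ x k) (hbdd : BddAbove (Set.range x))
    (hrec : ∀ k : ℕ, x k ≤ C * (2:ℝ) ^ (-γ * (k:ℝ))
        + η * ∑ l ∈ Finset.range k, (2:ℝ) ^ (-γ * ((k:ℝ) - (l:ℝ))) * x l
        + η * ∑' j : ℕ, (2:ℝ) ^ (-γ' * (j:ℝ)) * x (k + j)) :
    ∀ k : ℕ, x k ≤ (4 * C + ⨆ k, x k) * (2:ℝ) ^ (-ρ * (k:ℝ)) := by
  obtain ⟨hρ0, hργ⟩ := hρ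
  have hrec' : ∀ k, x k ≤ C * (2 ^ (-γ)) ^ k + η * ∑ l ∈ range k, (2 ^ (-γ)) ^ (k - l) * x l
      + η * ∑' j, (2 ^ (-γ')) ^ j * x (k + j) := by
    intro k
    convert hrec k using 4
    · rw [two_rpow_mul_natCast]
    · refine sum_congr rfl fun l hl => ?_
      rw [← Nat.cast_sub (mem_range.mp hl).le, two_rpow_mul_natCast]
    · simp only [two_rpow_mul_natCast]
  have hrs : (2 : ℝ) ^ (-γ) = 2 ^ (ρ - γ) * 2 ^ (-ρ) := by
    rw [← Real.rpow_add two_pos]; ring_nf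
  have hlt : ∀ a : ℝ, a < 0 → (2 : ℝ) ^ a < 1 := fun a ha =>
    Real.rpow_lt_one_of_one_lt_of_neg one_lt_two ha
  simp only [le_min_iff, mul_min_of_nonneg _ _ (by norm_num : (0 : ℝ) ≤ 1 / 4)] at hηle
  obtain ⟨-, hηr', hηs⟩ := hηle
  intro k
  have hM : 0 ≤ ⨆ k, x k := (hx0 0).trans (le_ciSup hbdd 0)
  have hx := le_two_mul_pow_of_le_geometric_sums hC.le hη.le (by positivity)
    (hlt _ (by linarith)).le (by positivity) hrs.le (by positivity) (hlt _ (by linarith))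
    (by positivity) (hlt _ (by linarith)) hηs hηr' hx0 hbdd hrec' k
  rw [two_rpow_mul_natCast]
  calc x k ≤ 2 * C * (2 ^ (-ρ)) ^ k := hx
    _ ≤ (4 * C + ⨆ k, x k) * (2 ^ (-ρ)) ^ k := by gcongr; linarith

theorem stmt_0 (γ γ' C η ρ : ℝ) (hγ : 0 < γ) (hγ' : 0 < γ') (hC : 0 < C) (hη : 0 < η)
    (hρ : ρ ∈ Set.Ioo 0 γ)
    (hηle : η ≤ (1/4) * min (1 - (2:ℝ) ^ (-γ)) (min (1 - (2:ℝ) ^ (-γ')) (1 - (2:ℝ) ^ (ρ - γ))))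
    (x : ℕ → ℝ) (hx0 : ∀ k, 0 ≤ x k) (hbdd : BddAbove (Set.range x))
    (hrec : ∀ k : ℕ, x k ≤ C * (2:ℝ) ^ (-γ * (k:ℝ))
        + η * ∑ l ∈ Finset.range k, (2:ℝ) ^ (-γ * ((k:ℝ) - (l:ℝ))) * x l
        + η * ∑' j : ℕ, (2:ℝ) ^ (-γ' * (j:ℝ)) * x (k + j)) :
    ∀ k : ℕ, x k ≤ (4 * C + ⨆ k, x k) * (2:ℝ) ^ (-ρ * (k:ℝ)) :=
  stmt_0_general γ γ' C η ρ hγ' hC hη hρ hηle x hx0 hbdd hrec
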